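/- Let a ∈ A. Then: (i) for p, q ∈ P, φ_a(p) ⊥ q if and only if p ⊥ φ_a(q); (ii) the Sasaki mapping φ_a preserves all existing suprema in P: if Q ⊆ P and r is the supremum of Q in P, then φ_a(r) is the supremum of {φ_a(q) : q ∈ Q} in P. -/
import Mathlib


/-- A synaptic algebra: a real vector subspace `carrier` of a unital associative
real algebra `R`, containing `1`, equipped with a positive cone `Pos` making it a
partially ordered archimedean real vector space with order unit `1`, and
satisfying conditions [SA2]–[SA9]. The partial order is `a ≤ b ↔ b - a ∈ Pos`. -/
structure SynapticAlgebra (R : Type*) [Ring R] [Algebra ℝ R] where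
  carrier : Set R
  one_mem : (1 : R) ∈ carrier
  add_mem : ∀ {a b : R}, a ∈ carrier → b ∈ carrier → a + b ∈ carrier
  smul_mem : ∀ (t : ℝ) {a : R}, a ∈ carrier → t • a ∈ carrier
  neg_mem : ∀ {a : R}, a ∈ carrier → -a ∈ carrier
  Pos : Set R
  pos_subset : Pos ⊆ carrier
  pos_add : ∀ {a b : R}, a ∈ Pos → b ∈ Pos → a + b ∈ Pos
  pos_smul : ∀ {t : ℝ}, 0 ≤ t → ∀ {a : R}, a ∈ Pos → t • a ∈ Pos
  pos_antisymm : ∀ {a : R}, a ∈ Pos → -a ∈ Pos → a = 0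
  arch : ∀ {a b : R}, a ∈ carrier → b ∈ carrier →
    (∀ n : ℕ, b - (n : ℝ) • a ∈ Pos) → -a ∈ Pos
  one_pos : (1 : R) ∈ Pos
  orderUnit : ∀ {a : R}, a ∈ carrier → ∃ n : ℕ, (n : ℝ) • (1 : R) - a ∈ Pos
  SA2 : ∀ {a b : R}, a ∈ Pos → b ∈ Pos → a * b = b * a → a * b ∈ Pos
  SA3 : ∀ {a : R}, a ∈ carrier → a * a ∈ Pos
  SA4 : ∀ {a b : R}, a ∈ Pos → b ∈ Pos → a * b * a ∈ Pos
  SA5 : ∀ {a b : R}, a ∈ carrier → b ∈ Pos → a * b * a = 0 → a * b = 0 ∧ b * a = 0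
  SA6 : ∀ {a : R}, a ∈ Pos →
    ∃ b : R, b ∈ Pos ∧ (∀ c ∈ carrier, c * a = a * c → c * b = b * c) ∧ b * b = a
  SA7 : ∀ {a : R}, a ∈ carrier →
    ∃ p : R, p ∈ carrier ∧ p * p = p ∧ ∀ b ∈ carrier, (a * b = 0 ↔ p * b = 0)
  SA8 : ∀ {a : R}, a ∈ carrier → a - 1 ∈ Pos → ∃ b ∈ carrier, a * b = 1 ∧ b * a = 1
  SA9 : ∀ {a b : R}, a ∈ carrier → b ∈ carrier → ∀ s : ℕ → R,
    (∀ n, s n ∈ carrier) → (∀ n, s (n + 1) - s n ∈ Pos) →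
    (∀ m n, s m * s n = s n * s m) → (∀ n, s n * b = b * s n) →
    (∀ ε : ℝ, 0 < ε →
      ∃ N : ℕ, ∀ n ≥ N, (a - s n) - (-ε) • (1 : R) ∈ Pos ∧ ε • (1 : R) - (a - s n) ∈ Pos) →
    a * b = b * a

namespace SynapticAlgebra

variable {R : Type*} [Ring R] [Algebra ℝ R]

/-- The partial order of the synaptic algebra: `a ≤ b` iff `b - a` is in the positive cone. -/
def le (S : SynapticAlgebra R) (a b : R) : Prop := b - a ∈ S.Pos

/-- The identification of a real number `t` with the element `t·1` of the algebra. -/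
def scal (_ : SynapticAlgebra R) (t : ℝ) : R := t • (1 : R)

/-- The order-unit norm: `‖a‖ = inf {t : ℝ | 0 < t ∧ -t·1 ≤ a ≤ t·1}`. -/
noncomputable def nrm (S : SynapticAlgebra R) (a : R) : ℝ :=
  sInf {t : ℝ | 0 < t ∧ S.le (S.scal (-t)) a ∧ S.le a (S.scal t)}

/-- `p` is a projection: an idempotent element of the algebra. -/
def IsProj (S : SynapticAlgebra R) (p : R) : Prop := p ∈ S.carrier ∧ p * p = p

/-- `e` is an effect: an element with `0 ≤ e ≤ 1`. -/
def IsEff (S : SynapticAlgebra R) (e : R) : Prop := e ∈ S.carrier ∧ S.le 0 e ∧ S.le e 1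

/-- `b ∈ CC(a)`: `b` is in the algebra and commutes with every element of the
algebra that commutes with `a` (the double commutant of `a`). -/
def inCC (S : SynapticAlgebra R) (a b : R) : Prop :=
  b ∈ S.carrier ∧ ∀ c ∈ S.carrier, c * a = a * c → c * b = b * c

/-- The square root of a positive element (chosen via [SA6]; it is unique). -/
noncomputable def sqrt (S : SynapticAlgebra R) (a : R) : R :=
  @dite R (a ∈ S.Pos) (Classical.dec _) (fun h => Classical.choose (S.SA6 h)) (fun _ => 0)

/-- The carrier projection `a°` of `a` (chosen via [SA7]; it is unique):
the projection `p` such that for all `b` in the algebra, `ab = 0 ↔ pb = 0`. -/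
noncomputable def carr (S : SynapticAlgebra R) (a : R) : R :=
  @dite R (a ∈ S.carrier) (Classical.dec _) (fun h => Classical.choose (S.SA7 h)) (fun _ => 0)

/-- Absolute value: `|a| := (a²)^{1/2}`. -/
noncomputable def abs (S : SynapticAlgebra R) (a : R) : R := S.sqrt (a * a)

/-- Positive part: `a⁺ := ½(|a| + a)`. -/
noncomputable def posPart (S : SynapticAlgebra R) (a : R) : R := (1/2 : ℝ) • (S.abs a + a)

/-- Negative part: `a⁻ := ½(|a| − a)`. -/
noncomputable def negPart (S : SynapticAlgebra R) (a : R) : R := (1/2 : ℝ) • (S.abs a - a)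

/-- Signum: `sgn(a) := (a⁺)° − (a⁻)°`. -/
noncomputable def sgn (S : SynapticAlgebra R) (a : R) : R :=
  S.carr (S.posPart a) - S.carr (S.negPart a)

/-- The Sasaki mapping: `φ_a(b) := (aba)°`. -/
noncomputable def sas (S : SynapticAlgebra R) (a b : R) : R := S.carr (a * b * a)

/-- `m` is the infimum of the projections `p` and `q` in the poset `P` of projections. -/
def IsMeet (S : SynapticAlgebra R) (p q m : R) : Prop :=
  S.IsProj m ∧ S.le m p ∧ S.le m q ∧ ∀ r, S.IsProj r → S.le r p → S.le r q → S.le r m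

/-- `j` is the supremum of the projections `p` and `q` in the poset `P` of projections. -/
def IsJoin (S : SynapticAlgebra R) (p q j : R) : Prop :=
  S.IsProj j ∧ S.le p j ∧ S.le q j ∧ ∀ r, S.IsProj r → S.le p r → S.le q r → S.le j r

end SynapticAlgebra

open SynapticAlgebra Filter

variable {R : Type*} [Ring R] [Algebra ℝ R]

namespace SynapticAlgebra

variable (S : SynapticAlgebra R)

lemma aux_zero_pos : (0 : R) ∈ S.Pos := by
  have := S.pos_smul (le_refl (0:ℝ)) S.one_pos
  simpa using this

lemma aux_le_refl (a : R) : S.le a a := by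
  simpa [SynapticAlgebra.le] using S.aux_zero_pos

lemma aux_le_trans {a b c : R} (h1 : S.le a b) (h2 : S.le b c) : S.le a c := by
  have := S.pos_add h2 h1
  simpa [SynapticAlgebra.le, sub_add_sub_cancel] using this

lemma aux_sub_mem {a b : R} (ha : a ∈ S.carrier) (hb : b ∈ S.carrier) :
    a - b ∈ S.carrier := by
  simpa [sub_eq_add_neg] using S.add_mem ha (S.neg_mem hb)

lemma aux_sq_mem {a : R} (ha : a ∈ S.carrier) : a * a ∈ S.carrier :=
  S.pos_subset (S.SA3 ha)

lemma aux_jordan_mem {a b : R} (ha : a ∈ S.carrier) (hb : b ∈ S.carrier) :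
    a * b + b * a ∈ S.carrier := by
  have h1 : (a + b) * (a + b) ∈ S.carrier := S.aux_sq_mem (S.add_mem ha hb)
  have h2 : (a + b) * (a + b) - a * a - b * b ∈ S.carrier :=
    S.aux_sub_mem (S.aux_sub_mem h1 (S.aux_sq_mem ha)) (S.aux_sq_mem hb)
  have : (a + b) * (a + b) - a * a - b * b = a * b + b * a := by noncomm_ring
  rwa [this] at h2

lemma aux_aba_mem {a b : R} (ha : a ∈ S.carrier) (hb : b ∈ S.carrier) :
    a * b * a ∈ S.carrier := by
  set c : R := a * b + b * a with hc
  have hcm : c ∈ S.carrier := S.aux_jordan_mem ha hb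
  have h1 : a * c + c * a ∈ S.carrier := S.aux_jordan_mem ha hcm
  have h2 : (a * a) * b + b * (a * a) ∈ S.carrier :=
    S.aux_jordan_mem (S.aux_sq_mem ha) hb
  have h3 : (a * c + c * a) - ((a * a) * b + b * (a * a)) ∈ S.carrier :=
    S.aux_sub_mem h1 h2
  have h4 : (a * c + c * a) - ((a * a) * b + b * (a * a)) = a * b * a + a * b * a := by
    rw [hc]; noncomm_ring
  rw [h4] at h3
  have h5 : (1/2 : ℝ) • (a * b * a + a * b * a) ∈ S.carrier := S.smul_mem _ h3
  have h6 : (1/2 : ℝ) • (a * b * a + a * b * a) = a * b * a := by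
    rw [← two_smul ℝ (a * b * a), smul_smul]; norm_num
  rwa [h6] at h5

lemma aux_proj_pos {p : R} (hp : S.IsProj p) : p ∈ S.Pos := by
  have := S.SA3 hp.1
  rwa [hp.2] at this

lemma aux_orth_comm {p q : R} (hp : S.IsProj p) (hq : S.IsProj q)
    (h : p * q = 0) : q * p = 0 := by
  have h1 : q * p * q = 0 := by rw [mul_assoc, h, mul_zero]
  exact (S.SA5 hq.1 (S.aux_proj_pos hp) h1).2.symm ▸ (S.SA5 hq.1 (S.aux_proj_pos hp) h1).1

lemma aux_le_one_sub_iff {p q : R} (hp : S.IsProj p) (hq : S.IsProj q) :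
    S.le p (1 - q) ↔ p * q = 0 := by
  constructor
  · intro h
    have hd : (1 - q) - p ∈ S.Pos := h
    have h1 : q * ((1 - q) - p) * q ∈ S.Pos := S.SA4 (S.aux_proj_pos hq) hd
    have h2 : q * ((1 - q) - p) * q = q * q - q * q * q - q * p * q := by noncomm_ring
    have h3 : q * q - q * q * q - q * p * q = -(q * p * q) := by
      rw [hq.2, hq.2]; abel
    rw [h2, h3] at h1
    have h4 : q * p * q ∈ S.Pos := S.SA4 (S.aux_proj_pos hq) (S.aux_proj_pos hp)
    have h5 : q * p * q = 0 := S.pos_antisymm h4 h1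
    exact (S.SA5 hq.1 (S.aux_proj_pos hp) h5).2
  · intro h
    have hqp : q * p = 0 := S.aux_orth_comm hp hq h
    have hmem : (1 : R) - q - p ∈ S.carrier :=
      S.aux_sub_mem (S.aux_sub_mem S.one_mem hq.1) hp.1
    have hsq : ((1 : R) - q - p) * ((1 : R) - q - p) = (1 : R) - q - p := by
      have e : ((1 : R) - q - p) * ((1 : R) - q - p) =
          1 - q - p - q + q * q + q * p - p + p * q + p * p := by noncomm_ring
      rw [e, hq.2, hp.2, h, hqp]; abel
    have := S.SA3 hmem
    rw [hsq] at this
    show (1 - q) - p ∈ S.Pos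
    exact this

lemma aux_carr_spec {c : R} (hc : c ∈ S.carrier) :
    S.carr c ∈ S.carrier ∧ S.carr c * S.carr c = S.carr c ∧
      ∀ b ∈ S.carrier, (c * b = 0 ↔ S.carr c * b = 0) := by
  unfold SynapticAlgebra.carr
  rw [dif_pos hc]
  exact Classical.choose_spec (S.SA7 hc)

lemma aux_sas_proj {a b : R} (ha : a ∈ S.carrier) (hb : b ∈ S.carrier) :
    S.IsProj (S.sas a b) := by
  have h := S.aux_carr_spec (S.aux_aba_mem ha hb)
  exact ⟨h.1, h.2.1⟩

lemma aux_one_sub_proj {p : R} (hp : S.IsProj p) : S.IsProj (1 - p) := by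
  refine ⟨S.aux_sub_mem S.one_mem hp.1, ?_⟩
  have : (1 - p) * (1 - p) = 1 - p - p + p * p := by noncomm_ring
  rw [this, hp.2]; abel

/-- Key computational step: if `(apa)q = 0` then `(aqa)p = 0`. -/
lemma aux_key {a p q : R} (ha : a ∈ S.carrier) (hp : S.IsProj p) (hq : S.IsProj q)
    (h : (a * p * a) * q = 0) : (a * q * a) * p = 0 := by
  have h1 : (a * q * a) * p * (a * q * a) = a * q * ((a * p * a) * q) * a := by
    noncomm_ring
  rw [h, mul_zero, zero_mul] at h1
  exact (S.SA5 (S.aux_aba_mem ha hq.1) (S.aux_proj_pos hp) h1).1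

end SynapticAlgebra

/-- Theorem 5.4: (i) `φ_a(p) ⊥ q ↔ p ⊥ φ_a(q)`; (ii) the Sasaki mapping `φ_a`
preserves all existing suprema in `P`. -/
theorem stmt17 (S : SynapticAlgebra R) {a : R} (ha : a ∈ S.carrier) :
    (∀ p q, S.IsProj p → S.IsProj q →
      (S.le (S.sas a p) (1 - q) ↔ S.le p (1 - S.sas a q))) ∧
    (∀ Q : Set R, (∀ q ∈ Q, S.IsProj q) → ∀ r, S.IsProj r →
      ((∀ q ∈ Q, S.le q r) ∧ (∀ t, S.IsProj t → (∀ q ∈ Q, S.le q t) → S.le r t)) →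
      ((∀ q ∈ Q, S.le (S.sas a q) (S.sas a r)) ∧
       (∀ t, S.IsProj t → (∀ q ∈ Q, S.le (S.sas a q) t) → S.le (S.sas a r) t))) := by
  have part1 : ∀ p q, S.IsProj p → S.IsProj q →
      (S.le (S.sas a p) (1 - q) ↔ S.le p (1 - S.sas a q)) := by
    intro p q hp hq
    have hapa : a * p * a ∈ S.carrier := S.aux_aba_mem ha hp.1
    have haqa : a * q * a ∈ S.carrier := S.aux_aba_mem ha hq.1
    have hep : S.IsProj (S.sas a p) := S.aux_sas_proj ha hp.1
    have hfq : S.IsProj (S.sas a q) := S.aux_sas_proj ha hq.1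
    have specp := S.aux_carr_spec hapa
    have specq := S.aux_carr_spec haqa
    constructor
    · intro h
      have h1 : S.sas a p * q = 0 := (S.aux_le_one_sub_iff hep hq).mp h
      have h2 : (a * p * a) * q = 0 := (specp.2.2 q hq.1).mpr h1
      have h3 : (a * q * a) * p = 0 := S.aux_key ha hp hq h2
      have h4 : S.sas a q * p = 0 := (specq.2.2 p hp.1).mp h3
      have h5 : p * S.sas a q = 0 := S.aux_orth_comm hfq hp h4
      exact (S.aux_le_one_sub_iff hp hfq).mpr h5
    · intro h
      have h1 : p * S.sas a q = 0 := (S.aux_le_one_sub_iff hp hfq).mp h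
      have h2 : S.sas a q * p = 0 := S.aux_orth_comm hp hfq h1
      have h3 : (a * q * a) * p = 0 := (specq.2.2 p hp.1).mpr h2
      have h4 : (a * p * a) * q = 0 := S.aux_key ha hq hp h3
      have h5 : S.sas a p * q = 0 := (specp.2.2 q hq.1).mp h4
      exact (S.aux_le_one_sub_iff hep hq).mpr h5
  refine ⟨part1, ?_⟩
  intro Q hQ r hr hsup
  obtain ⟨hub, hlub⟩ := hsup
  have hfr : S.IsProj (S.sas a r) := S.aux_sas_proj ha hr.1
  have hu : S.IsProj (1 - S.sas a r) := S.aux_one_sub_proj hfr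
  constructor
  · intro q hq
    have step1 : S.le (S.sas a r) (1 - (1 - S.sas a r)) := by
      rw [sub_sub_cancel]; exact S.aux_le_refl _
    have step2 : S.le r (1 - S.sas a (1 - S.sas a r)) :=
      (part1 r (1 - S.sas a r) hr hu).mp step1
    have step3 : S.le q (1 - S.sas a (1 - S.sas a r)) :=
      S.aux_le_trans (hub q hq) step2
    have step4 : S.le (S.sas a q) (1 - (1 - S.sas a r)) :=
      (part1 q (1 - S.sas a r) (hQ q hq) hu).mpr step3
    rwa [sub_sub_cancel] at step4
  · intro t ht hqt
    have hv : S.IsProj (1 - t) := S.aux_one_sub_proj ht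
    have hs : S.IsProj (1 - S.sas a (1 - t)) :=
      S.aux_one_sub_proj (S.aux_sas_proj ha hv.1)
    have hub' : ∀ q ∈ Q, S.le q (1 - S.sas a (1 - t)) := by
      intro q hq
      have h1 : S.le (S.sas a q) (1 - (1 - t)) := by
        rw [sub_sub_cancel]; exact hqt q hq
      exact (part1 q (1 - t) (hQ q hq) hv).mp h1
    have h2 : S.le r (1 - S.sas a (1 - t)) := hlub _ hs hub'
    have h3 : S.le (S.sas a r) (1 - (1 - t)) :=
      (part1 r (1 - t) hr hv).mpr h2
    rwa [sub_sub_cancel] at h3
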